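/- Let G be a connected non-complete graph with n vertices and H a connected graph with m vertices, and let g be an integer with 1 ≤ g ≤ m − 1. Then: κ_g(G ⊟ H) = 1 if and only if κ(G) = 1; if κ(G) = 2 and G has a minimum vertex cut consisting of two non-adjacent vertices, then κ_g(G ⊟ H) = 2; if κ(G) = 2 and every minimum vertex cut of G consists of two adjacent vertices, then κ_g(G ⊟ H) = 3; and if κ(G) ≥ 3, then κ_g(G ⊟ H) = 3. -/

import Mathlib

open SimpleGraph

namespace ExtraConn

variable {V W : Type*}

/-- `S` is an `R_g` vertex cut: deleting `S` disconnects the graph and every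
connected component of the remainder has at least `g+1` vertices. -/
def IsRgVertexCut (G : SimpleGraph V) (g : ℕ) (S : Set V) : Prop :=
  ¬ (G.induce Sᶜ).Preconnected ∧
    ∀ c : (G.induce Sᶜ).ConnectedComponent,
      g + 1 ≤ Nat.card {v : ↥Sᶜ // (G.induce Sᶜ).connectedComponentMk v = c}

/-- The `g`-extra vertex connectivity `κ_g(G)` (`⊤` if no `R_g` vertex cut exists). -/
noncomputable def kappaG (G : SimpleGraph V) (g : ℕ) : ℕ∞ :=
  sInf {n : ℕ∞ | ∃ S : Finset V, IsRgVertexCut G g ↑S ∧ (S.card : ℕ∞) = n}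

/-- `S` is a vertex cut of `G`. -/
def IsVertexCut (G : SimpleGraph V) (S : Set V) : Prop :=
  ¬ (G.induce Sᶜ).Preconnected

/-- The vertex connectivity `κ(G)` (for graphs admitting a vertex cut). -/
noncomputable def kappa (G : SimpleGraph V) : ℕ :=
  sInf {n : ℕ | ∃ S : Finset V, IsVertexCut G ↑S ∧ S.card = n}

/-- `S` is a minimum vertex cut of `G`. -/
def IsMinVertexCut (G : SimpleGraph V) (S : Finset V) : Prop :=
  IsVertexCut G ↑S ∧ S.card = kappa G

/-- Deleting the vertex set `↑A` leaves only components with at least `k+1` vertices. -/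
def CutBound (G : SimpleGraph V) (A : Finset V) (k : ℕ) : Prop :=
  ∀ c : (G.induce (↑A : Set V)ᶜ).ConnectedComponent,
    k + 1 ≤ Nat.card {v // (G.induce (↑A : Set V)ᶜ).connectedComponentMk v = c}

/-- `F` is an `R_g` edge cut. -/
def IsRgEdgeCut (G : SimpleGraph V) (g : ℕ) (F : Set (Sym2 V)) : Prop :=
  F ⊆ G.edgeSet ∧ ¬ (G.deleteEdges F).Preconnected ∧
    ∀ c : (G.deleteEdges F).ConnectedComponent,
      g + 1 ≤ Nat.card {v : V // (G.deleteEdges F).connectedComponentMk v = c}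

/-- The `g`-extra edge connectivity `λ_g(G)`. -/
noncomputable def lambdaG (G : SimpleGraph V) (g : ℕ) : ℕ∞ :=
  sInf {n : ℕ∞ | ∃ F : Finset (Sym2 V), IsRgEdgeCut G g ↑F ∧ (F.card : ℕ∞) = n}

/-- The edge connectivity `λ(G)`. -/
noncomputable def lambda (G : SimpleGraph V) : ℕ :=
  sInf {n : ℕ | ∃ F : Finset (Sym2 V), ↑F ⊆ G.edgeSet ∧
    ¬ (G.deleteEdges ↑F).Preconnected ∧ F.card = n}

/-- The edge corona `G ◇ H`. -/
def edgeCorona (G : SimpleGraph V) (H : SimpleGraph W) :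
    SimpleGraph (V ⊕ (G.edgeSet × W)) where
  Adj a b :=
    match a, b with
    | .inl u, .inl v => G.Adj u v
    | .inl u, .inr ew => u ∈ (ew.1 : Sym2 V)
    | .inr ew, .inl v => v ∈ (ew.1 : Sym2 V)
    | .inr ew, .inr ew' => ew.1 = ew'.1 ∧ H.Adj ew.2 ew'.2
  symm := by
    constructor
    rintro (u | ⟨e, w⟩) (v | ⟨e', w'⟩) h
    · exact h.symm
    · exact h
    · exact h
    · exact ⟨h.1.symm, h.2.symm⟩
  loopless := by
    constructor
    rintro (u | ⟨e, w⟩) h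
    · exact G.loopless.irrefl u h
    · exact H.loopless.irrefl w h.2

/-- The neighbourhood corona `G * H`. -/
def neighbourhoodCorona (G : SimpleGraph V) (H : SimpleGraph W) :
    SimpleGraph (V ⊕ (V × W)) where
  Adj a b :=
    match a, b with
    | .inl u, .inl v => G.Adj u v
    | .inl u, .inr iw => G.Adj u iw.1
    | .inr iw, .inl v => G.Adj v iw.1
    | .inr iw, .inr iw' => iw.1 = iw'.1 ∧ H.Adj iw.2 iw'.2
  symm := by
    constructor
    rintro (u | ⟨i, w⟩) (v | ⟨i', w'⟩) h
    · exact h.symm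
    · exact h
    · exact h
    · exact ⟨h.1.symm, h.2.symm⟩
  loopless := by
    constructor
    rintro (u | ⟨i, w⟩) h
    · exact G.loopless.irrefl u h
    · exact H.loopless.irrefl w h.2

/-- The subdivision graph `S(G)`. -/
def subdivision (G : SimpleGraph V) : SimpleGraph (V ⊕ G.edgeSet) where
  Adj a b :=
    match a, b with
    | .inl u, .inr e => u ∈ (e : Sym2 V)
    | .inr e, .inl u => u ∈ (e : Sym2 V)
    | _, _ => False
  symm := by
    constructor
    rintro (u | e) (v | e') h
    · exact h.elim
    · exact h
    · exact h
    · exact h.elim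
  loopless := by
    constructor
    rintro (u | e) h <;> exact h.elim

/-- The subdivision vertex neighbourhood corona `G ⊡ H`. -/
def subdivisionVertexNC (G : SimpleGraph V) (H : SimpleGraph W) :
    SimpleGraph ((V ⊕ G.edgeSet) ⊕ (V × W)) where
  Adj a b :=
    match a, b with
    | .inl x, .inl y => (subdivision G).Adj x y
    | .inl (.inr e), .inr iw => iw.1 ∈ (e : Sym2 V)
    | .inr iw, .inl (.inr e) => iw.1 ∈ (e : Sym2 V)
    | .inr iw, .inr iw' => iw.1 = iw'.1 ∧ H.Adj iw.2 iw'.2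
    | _, _ => False
  symm := by
    constructor
    rintro ((u | e) | ⟨i, w⟩) ((v | e') | ⟨i', w'⟩) h
    · exact h.elim
    · exact h
    · exact h.elim
    · exact h
    · exact h.elim
    · exact h
    · exact h.elim
    · exact h
    · exact ⟨h.1.symm, h.2.symm⟩
  loopless := by
    constructor
    rintro ((u | e) | ⟨i, w⟩) h
    · exact h.elim
    · exact h.elim
    · exact H.loopless.irrefl w h.2

/-- The subdivision edge neighbourhood corona `G ⊟ H`. -/
def subdivisionEdgeNC (G : SimpleGraph V) (H : SimpleGraph W) :
    SimpleGraph ((V ⊕ G.edgeSet) ⊕ (G.edgeSet × W)) where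
  Adj a b :=
    match a, b with
    | .inl x, .inl y => (subdivision G).Adj x y
    | .inl (.inl u), .inr ew => u ∈ (ew.1 : Sym2 V)
    | .inr ew, .inl (.inl u) => u ∈ (ew.1 : Sym2 V)
    | .inr ew, .inr ew' => ew.1 = ew'.1 ∧ H.Adj ew.2 ew'.2
    | _, _ => False
  symm := by
    constructor
    rintro ((u | e) | ⟨e₀, w⟩) ((v | e') | ⟨e₀', w'⟩) h
    · exact h.elim
    · exact h
    · exact h
    · exact h
    · exact h.elim
    · exact h.elim
    · exact h
    · exact h.elim
    · exact ⟨h.1.symm, h.2.symm⟩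
  loopless := by
    constructor
    rintro ((u | e) | ⟨e₀, w⟩) h
    · exact h.elim
    · exact h.elim
    · exact H.loopless.irrefl w h.2

/-- The generalized corona `G ∘ ⋀ᵢ Hᵢ`. -/
def genCorona (G : SimpleGraph V) {W : V → Type*} (H : ∀ v, SimpleGraph (W v)) :
    SimpleGraph (V ⊕ (Σ v, W v)) where
  Adj a b :=
    match a, b with
    | .inl u, .inl v => G.Adj u v
    | .inl u, .inr p => u = p.1
    | .inr p, .inl v => v = p.1
    | .inr p, .inr q =>
        ∃ (v : V) (w w' : W v), p = ⟨v, w⟩ ∧ q = ⟨v, w'⟩ ∧ (H v).Adj w w'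
  symm := by
    constructor
    rintro (u | p) (v | q) h
    · exact h.symm
    · exact h
    · exact h
    · obtain ⟨v, w, w', rfl, rfl, hadj⟩ := h
      exact ⟨v, w', w, rfl, rfl, hadj.symm⟩
  loopless := by
    constructor
    rintro (u | p) h
    · exact G.loopless.irrefl u h
    · obtain ⟨v, w, w', rfl, h2, hadj⟩ := h
      obtain rfl : w = w' := by simpa using h2
      exact (H v).loopless.irrefl w hadj

/-- The rooted product `H(G)` with root `r`. -/
def rootedProduct (G : SimpleGraph V) (H : SimpleGraph W) (r : W) :
    SimpleGraph (V × W) where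
  Adj a b := (a.1 = b.1 ∧ H.Adj a.2 b.2) ∨ (a.2 = r ∧ b.2 = r ∧ G.Adj a.1 b.1)
  symm := by
    constructor
    rintro ⟨x, y⟩ ⟨x', y'⟩ (⟨h1, h2⟩ | ⟨h1, h2, h3⟩)
    · exact Or.inl ⟨h1.symm, h2.symm⟩
    · exact Or.inr ⟨h2, h1, h3.symm⟩
  loopless := by
    constructor
    rintro ⟨x, y⟩ (⟨-, h⟩ | ⟨-, -, h⟩)
    · exact H.loopless.irrefl y h
    · exact G.loopless.irrefl x h

/-!
A set `S` of at most `|W|` vertices of `G ⊟ H` never contains a whole gadget `{w_e} ∪ H_e`, so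
`G ⊟ H - S` is connected as soon as `G - (S ∩ V)` is connected and no edge of `G` has both ends
in `S`. If instead `S` contains both ends of an edge `uv` but not `w_uv`, then `w_uv` is isolated,
which no `R_g` cut with `g ≥ 1` allows. Hence an `R_g` cut with at most two vertices yields an
independent vertex cut of `G` that is no larger: `κ_g(G ⊟ H) ≥ min(κ(G), 3)`, and even `≥ 3` when
every minimum vertex cut of `G` is an adjacent pair.

Conversely, an independent vertex cut `A` of `G` is an `R_g` cut of `G ⊟ H`, since every component
of `G ⊟ H - A` contains a whole copy of `H` and so has `m ≥ g + 1` vertices; and for an edge `uv`,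
`{u, v, w_uv}` is an `R_g` cut, which cuts off `H_uv`.
-/

theorem _root_.SimpleGraph.Reachable.apply_eq_of_forall_adj {α β : Type*} {Γ : SimpleGraph α}
    {f : α → β} (hf : ∀ x y, Γ.Adj x y → f x = f y) {x y : α} (h : Γ.Reachable x y) :
    f x = f y := by
  obtain ⟨p⟩ := h
  induction p with
  | nil => rfl
  | cons hadj _ ih => exact (hf _ _ hadj).trans ih

theorem not_isRgVertexCut_of_forall_adj_mem {α : Type*} {Γ : SimpleGraph α} {g : ℕ}
    (hg : 1 ≤ g) {S : Set α} {x : α} (hx : x ∉ S) (hnbr : ∀ y, Γ.Adj x y → y ∈ S) :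
    ¬ IsRgVertexCut Γ g S := by
  rintro ⟨-, hcard⟩
  let x' : ↥Sᶜ := ⟨x, hx⟩
  have hisolated : ∀ y z : ↥Sᶜ, (Γ.induce Sᶜ).Adj y z → (y = x') = (z = x') := by
    rintro y z hyz
    refine propext ⟨?_, ?_⟩ <;> rintro rfl
    · exact absurd (hnbr _ hyz) z.2
    · exact absurd (hnbr _ hyz.symm) y.2
  have key : ∀ z : ↥Sᶜ, (Γ.induce Sᶜ).Reachable z x' → z = x' := fun z hz =>
    (hz.apply_eq_of_forall_adj hisolated).mpr rfl
  have : Subsingleton {z : ↥Sᶜ //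
      (Γ.induce Sᶜ).connectedComponentMk z = (Γ.induce Sᶜ).connectedComponentMk x'} :=
    ⟨fun a b => Subtype.ext <| (key _ (ConnectedComponent.exact a.2)).trans
      (key _ (ConnectedComponent.exact b.2)).symm⟩
  have := hcard ((Γ.induce Sᶜ).connectedComponentMk x')
  rw [Nat.card_of_subsingleton ⟨x', rfl⟩] at this
  omega

theorem kappaG_le_card {α : Type*} {Γ : SimpleGraph α} {g : ℕ} {S : Finset α}
    (h : IsRgVertexCut Γ g ↑S) : kappaG Γ g ≤ S.card :=
  sInf_le ⟨S, h, rfl⟩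

theorem le_kappaG {α : Type*} {Γ : SimpleGraph α} {g k : ℕ}
    (h : ∀ S : Finset α, IsRgVertexCut Γ g ↑S → k ≤ S.card) :
    (k : ℕ∞) ≤ kappaG Γ g :=
  le_sInf <| by rintro n ⟨S, hS, rfl⟩; exact_mod_cast h S hS

theorem _root_.SimpleGraph.reachable_induce_of_mem_edgeSet {G : SimpleGraph V} {s : Set V}
    {e : Sym2 V} (he : e ∈ G.edgeSet) {u v : V} (hu : u ∈ e) (hv : v ∈ e) (hus : u ∈ s)
    (hvs : v ∈ s) : (G.induce s).Reachable ⟨u, hus⟩ ⟨v, hvs⟩ := by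
  rcases eq_or_ne u v with rfl | huv
  · rfl
  rw [(Sym2.mem_and_mem_iff huv).mp ⟨hu, hv⟩] at he
  exact Adj.reachable he

theorem _root_.Sym2.exists_mem_ne_ne_of_ne {e : Sym2 V} (he : ¬ e.IsDiag) {u v : V}
    (hne : e ≠ s(u, v)) : ∃ t ∈ e, t ≠ u ∧ t ≠ v := by
  induction e using Sym2.ind with | _ a b => ?_
  by_contra! h
  have ha := h a (Sym2.mem_mk_left a b)
  have hb := h b (Sym2.mem_mk_right a b)
  rw [Sym2.mk_isDiag_iff] at he
  rcases eq_or_ne a u with rfl | hau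
  · exact hne (by rw [hb (Ne.symm he)])
  · obtain rfl := ha hau
    rcases eq_or_ne b u with rfl | hbu
    · exact hne Sym2.eq_swap
    · exact he (hb hbu).symm

theorem _root_.SimpleGraph.exists_ne_ne_of_ne_top {G : SimpleGraph V} (hG : G ≠ ⊤) {u v : V}
    (huv : G.Adj u v) : ∃ t, t ≠ u ∧ t ≠ v := by
  obtain ⟨a, b, hab, hnadj⟩ := ne_top_iff_exists_not_adj.mp hG
  obtain ⟨t, -, ht⟩ := Sym2.exists_mem_ne_ne_of_ne (e := s(a, b)) (by simpa using hab)
    fun h => hnadj (by rwa [← mem_edgeSet, h])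
  exact ⟨t, ht⟩

theorem _root_.SimpleGraph.Preconnected.exists_adj_of_ne_top {G : SimpleGraph V}
    (hG : G.Preconnected) (hne : G ≠ ⊤) (u : V) : ∃ v, G.Adj u v := by
  obtain ⟨a, b, hab, -⟩ := ne_top_iff_exists_not_adj.mp hne
  have : Nontrivial V := ⟨a, b, hab⟩
  exact hG.exists_adj_of_nontrivial u

section Kappa

variable {G : SimpleGraph V}

theorem kappa_le_card {A : Finset V} (h : IsVertexCut G ↑A) : kappa G ≤ A.card :=
  Nat.sInf_le ⟨A, h, rfl⟩

theorem isVertexCut_compl_pair [Fintype V] [DecidableEq V] {a b : V} (hab : a ≠ b)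
    (hnadj : ¬ G.Adj a b) : IsVertexCut G ↑(Finset.univ \ {a, b}) := by
  have hcompl : (↑(Finset.univ \ {a, b}) : Set V)ᶜ = {a, b} := by
    ext; simp [or_iff_not_imp_left]
  rw [IsVertexCut, hcompl]
  intro hp
  obtain ⟨p⟩ := hp ⟨a, by simp⟩ ⟨b, by simp⟩
  have hadj := p.adj_snd (p.not_nil_of_ne fun h => hab (congrArg Subtype.val h))
  rcases p.snd.2 with h | h
  · exact hadj.ne (Subtype.ext h.symm)
  · exact hnadj (h ▸ hadj)

theorem exists_isMinVertexCut [Fintype V] (hG : G ≠ ⊤) : ∃ A, IsMinVertexCut G A := by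
  classical
  obtain ⟨a, b, hab, hnadj⟩ := ne_top_iff_exists_not_adj.mp hG
  exact Nat.sInf_mem (s := {n | ∃ S : Finset V, IsVertexCut G ↑S ∧ S.card = n})
    ⟨_, _, isVertexCut_compl_pair hab hnadj, rfl⟩

theorem kappa_pos [Fintype V] (hG : G.Preconnected) (hne : G ≠ ⊤) : 0 < kappa G := by
  obtain ⟨A, hA, hcard⟩ := exists_isMinVertexCut hne
  refine Nat.pos_of_ne_zero fun h0 => hA ?_
  obtain rfl : A = ∅ := Finset.card_eq_zero.mp (hcard.trans h0)
  rw [Finset.coe_empty, Set.compl_empty]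
  exact (induceUnivIso G).preconnected_iff.mpr hG

end Kappa

namespace subdivisionEdgeNC

variable {G : SimpleGraph V} {H : SimpleGraph W}

theorem preconnected_induce_compl {S : Set ((V ⊕ G.edgeSet) ⊕ (G.edgeSet × W))}
    (hbase : (G.induce {u | .inl (.inl u) ∈ S}ᶜ).Preconnected)
    (hlink : ∀ e, .inl (.inr e) ∉ S ∨ ∃ w, .inr (e, w) ∉ S)
    (hend : ∀ e : G.edgeSet, ∃ u ∈ (e : Sym2 V), .inl (.inl u) ∉ S) :
    ((subdivisionEdgeNC G H).induce Sᶜ).Preconnected := by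
  set X := (subdivisionEdgeNC G H).induce Sᶜ
  let base : ↥{u | .inl (.inl u) ∈ S}ᶜ → X.ConnectedComponent :=
    fun u => X.connectedComponentMk ⟨.inl (.inl u.1), u.2⟩
  have hbase_adj : ∀ u v, (G.induce _).Adj u v → base u = base v := by
    rintro u v (huv : G.Adj u v)
    apply ConnectedComponent.sound
    rcases hlink ⟨s(u.1, v.1), huv⟩ with h | ⟨w, h⟩ <;>
      exact (Adj.reachable (v := ⟨_, h⟩) (Sym2.mem_mk_left _ _)).trans
        (Adj.reachable (Sym2.mem_mk_right _ _))
  have hanchor : ∀ x, ∃ u, X.connectedComponentMk x = base u := by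
    rintro ⟨(u | e) | ⟨e, w⟩, hx⟩
    · exact ⟨⟨u, hx⟩, rfl⟩
    all_goals
      obtain ⟨u, hue, hu⟩ := hend e
      exact ⟨⟨u, hu⟩, ConnectedComponent.sound (Adj.reachable hue)⟩
  intro x y
  obtain ⟨u, hu⟩ := hanchor x
  obtain ⟨v, hv⟩ := hanchor y
  exact ConnectedComponent.exact <|
    hu.trans <| ((hbase u v).apply_eq_of_forall_adj hbase_adj).trans hv.symm

theorem preconnected_induce_base {S : Set ((V ⊕ G.edgeSet) ⊕ (G.edgeSet × W))}
    (hend : ∀ e : G.edgeSet, ∃ u ∈ (e : Sym2 V), .inl (.inl u) ∉ S)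
    (hX : ((subdivisionEdgeNC G H).induce Sᶜ).Preconnected) :
    (G.induce {u | .inl (.inl u) ∈ S}ᶜ).Preconnected := by
  set Γ := G.induce {u | .inl (.inl u) ∈ S}ᶜ
  choose foot hfoot_mem hfoot using hend
  let π : ↥Sᶜ → Γ.ConnectedComponent
    | ⟨.inl (.inl u), hu⟩ => Γ.connectedComponentMk ⟨u, hu⟩
    | ⟨.inl (.inr e), _⟩ => Γ.connectedComponentMk ⟨foot e, hfoot e⟩
    | ⟨.inr (e, _), _⟩ => Γ.connectedComponentMk ⟨foot e, hfoot e⟩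
  have hfoot_eq : ∀ (e : G.edgeSet) u (hu : u ∈ (e : Sym2 V)) (hu' : u ∈ _),
      Γ.connectedComponentMk ⟨u, hu'⟩ = Γ.connectedComponentMk ⟨foot e, hfoot e⟩ :=
    fun e _ hu _ => ConnectedComponent.sound
      (reachable_induce_of_mem_edgeSet e.2 hu (hfoot_mem e) _ _)
  have hπ : ∀ x y, ((subdivisionEdgeNC G H).induce Sᶜ).Adj x y → π x = π y := by
    rintro ⟨(u | e) | ⟨e, w⟩, hx⟩ ⟨(v | f) | ⟨f, w'⟩, hy⟩ hxy
    all_goals first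
      | exact hxy.elim
      | exact hfoot_eq _ _ hxy _
      | exact (hfoot_eq _ _ hxy _).symm
      | obtain ⟨rfl, -⟩ := hxy; rfl
  intro u v
  exact ConnectedComponent.exact ((hX ⟨_, u.2⟩ ⟨_, v.2⟩).apply_eq_of_forall_adj hπ)

theorem card_le_card_connectedComponent [Finite V] [Finite W]
    {S : Set ((V ⊕ G.edgeSet) ⊕ (G.edgeSet × W))} (hH : H.Preconnected)
    (hG : ∀ u, ∃ v, G.Adj u v) (hcopy : ∀ (e : G.edgeSet) w, .inr (e, w) ∉ S)
    (hend : ∀ e : G.edgeSet, .inl (.inr e) ∉ S → ∃ u ∈ (e : Sym2 V), .inl (.inl u) ∉ S)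
    (c : ((subdivisionEdgeNC G H).induce Sᶜ).ConnectedComponent) :
    Nat.card W ≤ Nat.card
      {x // ((subdivisionEdgeNC G H).induce Sᶜ).connectedComponentMk x = c} := by
  obtain ⟨x, hx⟩ := c.exists_rep
  set X := (subdivisionEdgeNC G H).induce Sᶜ
  let copy (e : G.edgeSet) : H →g X :=
    { toFun := fun w => ⟨.inr (e, w), hcopy e w⟩
      map_rel' := fun h => ⟨rfl, h⟩ }
  have hcopy_reach : ∃ e, ∀ w, X.Reachable (copy e w) x := by
    obtain ⟨(u | e) | ⟨e, w₀⟩, hxS⟩ := x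
    · obtain ⟨v, huv⟩ := hG u
      exact ⟨⟨s(u, v), huv⟩, fun w => Adj.reachable (Sym2.mem_mk_left _ _)⟩
    · obtain ⟨u, hue, hu⟩ := hend e hxS
      exact ⟨e, fun w => (Adj.reachable (v := ⟨_, hu⟩) hue).trans
        (Adj.reachable (show X.Adj ⟨_, hu⟩ ⟨_, hxS⟩ from hue))⟩
    · exact ⟨e, fun w => (hH w w₀).map (copy e)⟩
  obtain ⟨e, he⟩ := hcopy_reach
  refine Nat.card_le_card_of_injective
    (fun w => ⟨copy e w, (ConnectedComponent.sound (he w)).trans hx⟩) fun w w' h => ?_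
  have : (Sum.inr (e, w) : (V ⊕ G.edgeSet) ⊕ (G.edgeSet × W)) = .inr (e, w') :=
    congrArg (·.1.1) h
  simpa using this

theorem isRgVertexCut_of_not_preconnected [Finite V] [Finite W] {g : ℕ}
    {S : Set ((V ⊕ G.edgeSet) ⊕ (G.edgeSet × W))} (hH : H.Preconnected)
    (hG : ∀ u, ∃ v, G.Adj u v) (hW : g + 1 ≤ Nat.card W)
    (hcopy : ∀ (e : G.edgeSet) w, .inr (e, w) ∉ S)
    (hend : ∀ e : G.edgeSet, .inl (.inr e) ∉ S → ∃ u ∈ (e : Sym2 V), .inl (.inl u) ∉ S)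
    (hS : ¬ ((subdivisionEdgeNC G H).induce Sᶜ).Preconnected) :
    IsRgVertexCut (subdivisionEdgeNC G H) g S :=
  ⟨hS, fun c => hW.trans (card_le_card_connectedComponent hH hG hcopy hend c)⟩

theorem notMem_or_exists_notMem_of_card_le [Fintype W]
    {S : Finset ((V ⊕ G.edgeSet) ⊕ (G.edgeSet × W))}
    (hS : S.card ≤ Fintype.card W) (e : G.edgeSet) :
    .inl (.inr e) ∉ S ∨ ∃ w, .inr (e, w) ∉ S := by
  classical
  by_contra! h
  let copy : W ↪ (V ⊕ G.edgeSet) ⊕ (G.edgeSet × W) :=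
    ⟨fun w => .inr (e, w), fun w w' h => by simpa using h⟩
  have hsub : insert (.inl (.inr e)) (Finset.univ.map copy) ⊆ S :=
    Finset.insert_subset h.1 fun x hx => by
      obtain ⟨w, -, rfl⟩ := Finset.mem_map.mp hx
      exact h.2 w
  have := Finset.card_le_card hsub
  rw [Finset.card_insert_of_notMem (by simp [copy]), Finset.card_map, Finset.card_univ] at this
  omega

theorem exists_isVertexCut_of_isRgVertexCut [Fintype V] [Fintype W] {g : ℕ} (hg : 1 ≤ g)
    (hW : 2 ≤ Fintype.card W) {S : Finset ((V ⊕ G.edgeSet) ⊕ (G.edgeSet × W))}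
    (hS : IsRgVertexCut (subdivisionEdgeNC G H) g ↑S) (hS2 : S.card ≤ 2) :
    ∃ A : Finset V, IsVertexCut G ↑A ∧ G.IsIndepSet ↑A ∧ A.card ≤ S.card := by
  classical
  let A := Finset.univ.filter fun u => .inl (.inl u) ∈ S
  have hA : (↑A : Set V) = {u | .inl (.inl u) ∈ S} := by ext; simp [A]
  have hAS : A.card ≤ S.card :=
    Finset.card_le_card_of_injOn (fun u => .inl (.inl u)) (fun u hu => by simpa [A] using hu)
      fun u _ v _ h => by simpa using h
  have hindep : G.IsIndepSet ↑A := by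
    intro u hu v hv huv hadj
    have hu : .inl (.inl u) ∈ S := by simpa [A] using hu
    have hv : .inl (.inl v) ∈ S := by simpa [A] using hv
    have hmid : .inl (.inr ⟨s(u, v), hadj⟩) ∉ S := fun hmid => by
      have := Finset.card_le_card (Finset.insert_subset hmid (Finset.insert_subset hu
        (Finset.singleton_subset_iff.mpr hv)))
      rw [Finset.card_insert_of_notMem (by simp), Finset.card_pair (by simpa using huv)] at this
      omega
    refine not_isRgVertexCut_of_forall_adj_mem hg hmid ?_ hS
    rintro ((t | f) | ⟨f, w⟩) ht
    · rcases Sym2.mem_iff.mp ht with rfl | rfl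
      exacts [hu, hv]
    all_goals exact ht.elim
  refine ⟨A, fun hbase => hS.1 (preconnected_induce_compl (hA ▸ hbase)
    (notMem_or_exists_notMem_of_card_le (by omega)) fun e => ?_), hindep, hAS⟩
  obtain ⟨u, hu, hue⟩ := hindep.nonempty_mem_compl_mem_edge (G := G) e.2
  exact ⟨u, hue, by simpa [A] using hu⟩

theorem isRgVertexCut_image_of_isVertexCut [Finite V] [Finite W] {g : ℕ} (hH : H.Preconnected)
    (hG : ∀ u, ∃ v, G.Adj u v) (hW : g + 1 ≤ Nat.card W) {A : Set V} (hA : IsVertexCut G A)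
    (hindep : G.IsIndepSet A) :
    IsRgVertexCut (subdivisionEdgeNC G H) g ((fun u => .inl (.inl u)) '' A) := by
  have hbase : {u | (.inl (.inl u) : (V ⊕ G.edgeSet) ⊕ (G.edgeSet × W)) ∈
      (fun u => .inl (.inl u)) '' A} = A := by
    ext; simp
  have hend (e : G.edgeSet) : ∃ u ∈ (e : Sym2 V),
      (.inl (.inl u) : (V ⊕ G.edgeSet) ⊕ (G.edgeSet × W)) ∉
        (fun u => .inl (.inl u)) '' A := by
    obtain ⟨u, hu, hue⟩ := hindep.nonempty_mem_compl_mem_edge (G := G) e.2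
    exact ⟨u, hue, by simpa using hu⟩
  refine isRgVertexCut_of_not_preconnected hH hG hW (by simp) (fun e _ => hend e)
    fun hX => hA ?_
  rw [← hbase]
  exact preconnected_induce_base hend hX

theorem isRgVertexCut_adj_triple [Finite V] [Finite W] {g : ℕ} (hGnc : G ≠ ⊤)
    (hH : H.Preconnected) (hG : ∀ u, ∃ v, G.Adj u v) (hW : g + 1 ≤ Nat.card W) {u v : V}
    (huv : G.Adj u v) :
    IsRgVertexCut (subdivisionEdgeNC G H) g
      {.inl (.inl u), .inl (.inl v), .inl (.inr ⟨s(u, v), huv⟩)} := by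
  set e₀ : G.edgeSet := ⟨s(u, v), huv⟩
  set S : Set ((V ⊕ G.edgeSet) ⊕ (G.edgeSet × W)) :=
    {.inl (.inl u), .inl (.inl v), .inl (.inr e₀)}
  refine isRgVertexCut_of_not_preconnected hH hG hW (by simp [S]) (fun e he => ?_) fun hX => ?_
  · have hne : (e : Sym2 V) ≠ s(u, v) := fun h => he (by simp [S, e₀, ← h])
    obtain ⟨t, hte, htu, htv⟩ :=
      Sym2.exists_mem_ne_ne_of_ne (G.not_isDiag_of_mem_edgeSet e.2) hne
    exact ⟨t, hte, by simp [S, htu, htv]⟩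
  -- the copy `H_{e₀}` is cut off: all its neighbours outside it lie in `S`
  obtain ⟨w₀⟩ := (Nat.card_pos_iff.mp (by omega : 0 < Nat.card W)).1
  obtain ⟨b, hbu, hbv⟩ := exists_ne_ne_of_ne_top hGnc huv
  let inCopy (x : ↥Sᶜ) : Prop := ∃ w, x.1 = .inr (e₀, w)
  have hclosed :
      ∀ x y, ((subdivisionEdgeNC G H).induce Sᶜ).Adj x y → inCopy x → inCopy y := by
    rintro ⟨x, hxS⟩ ⟨(t | f) | ⟨f, w'⟩, hy⟩ hxy ⟨w, rfl⟩
    · rcases Sym2.mem_iff.mp (show t ∈ (e₀ : Sym2 V) from hxy) with rfl | rfl <;>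
        simp [S] at hy
    · exact hxy.elim
    · obtain ⟨rfl, -⟩ := hxy
      exact ⟨w', rfl⟩
  have := (hX ⟨.inr (e₀, w₀), by simp [S]⟩ ⟨.inl (.inl b), by simp [S, hbu, hbv]⟩)
    |>.apply_eq_of_forall_adj (f := inCopy) fun x y h =>
      propext ⟨hclosed x y h, hclosed y x h.symm⟩
  simp [inCopy] at this

theorem min_kappa_three_le_kappaG [Fintype V] [Fintype W] {g : ℕ} (hg : 1 ≤ g)
    (hW : 2 ≤ Fintype.card W) :
    ((min (kappa G) 3 : ℕ) : ℕ∞) ≤ kappaG (subdivisionEdgeNC G H) g :=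
  le_kappaG fun S hS => by
    by_contra! hS3
    obtain ⟨A, hA, -, hAS⟩ := exists_isVertexCut_of_isRgVertexCut hg hW hS (by omega)
    have := kappa_le_card hA
    omega

theorem three_le_kappaG [Fintype V] [Fintype W] [DecidableEq V] {g : ℕ} (hg : 1 ≤ g)
    (hW : 2 ≤ Fintype.card W) (hκ : kappa G = 2)
    (hadj : ∀ A : Finset V, IsMinVertexCut G A → ∃ u v : V, G.Adj u v ∧ A = {u, v}) :
    3 ≤ kappaG (subdivisionEdgeNC G H) g :=
  le_kappaG fun S hS => by
    by_contra! hS3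
    obtain ⟨A, hA, hindep, hAS⟩ := exists_isVertexCut_of_isRgVertexCut hg hW hS (by omega)
    have := kappa_le_card hA
    obtain ⟨u, v, huv, rfl⟩ := hadj A ⟨hA, by omega⟩
    exact hindep (by simp) (by simp) huv.ne huv

theorem kappaG_le_card_of_isVertexCut [Fintype V] [Fintype W] {g : ℕ} (hH : H.Preconnected)
    (hG : ∀ u, ∃ v, G.Adj u v) (hW : g + 1 ≤ Fintype.card W) {A : Finset V}
    (hA : IsVertexCut G ↑A) (hindep : G.IsIndepSet ↑A) :
    kappaG (subdivisionEdgeNC G H) g ≤ A.card := by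
  classical
  have hcut :=
    isRgVertexCut_image_of_isVertexCut hH hG (by rwa [Nat.card_eq_fintype_card]) hA hindep
  rw [← Finset.coe_image] at hcut
  exact (kappaG_le_card hcut).trans (by exact_mod_cast Finset.card_image_le)

theorem kappaG_le_three [Fintype V] [Fintype W] {g : ℕ} (hGconn : G.Connected) (hGnc : G ≠ ⊤)
    (hH : H.Preconnected) (hW : g + 1 ≤ Fintype.card W) :
    kappaG (subdivisionEdgeNC G H) g ≤ 3 := by
  classical
  obtain ⟨u⟩ := hGconn.nonempty
  obtain ⟨v, huv⟩ := hGconn.preconnected.exists_adj_of_ne_top hGnc u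
  have hcut := isRgVertexCut_adj_triple hGnc hH (hGconn.preconnected.exists_adj_of_ne_top hGnc)
    (by rwa [Nat.card_eq_fintype_card]) huv
  rw [← Finset.coe_singleton, ← Finset.coe_insert, ← Finset.coe_insert] at hcut
  exact (kappaG_le_card hcut).trans (by exact_mod_cast Finset.card_le_three)

end subdivisionEdgeNC

theorem subdivisionEdgeNC_kappaG_small {V W : Type*} [Fintype V] [Fintype W] [DecidableEq V]
    (G : SimpleGraph V) (H : SimpleGraph W)
    (hGconn : G.Connected) (hGnc : G ≠ ⊤) (hHconn : H.Connected)
    (m : ℕ) (hm : Fintype.card W = m) (g : ℕ) (hg1 : 1 ≤ g) (hg2 : g + 1 ≤ m) :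
    (kappaG (subdivisionEdgeNC G H) g = 1 ↔ kappa G = 1) ∧
    ((kappa G = 2 ∧ ∃ u v : V, u ≠ v ∧ ¬ G.Adj u v ∧ IsMinVertexCut G {u, v}) →
      kappaG (subdivisionEdgeNC G H) g = 2) ∧
    ((kappa G = 2 ∧ ∀ A : Finset V, IsMinVertexCut G A →
        ∃ u v : V, G.Adj u v ∧ A = {u, v}) →
      kappaG (subdivisionEdgeNC G H) g = 3) ∧
    (3 ≤ kappa G → kappaG (subdivisionEdgeNC G H) g = 3) := by
  have hW : g + 1 ≤ Fintype.card W := hm ▸ hg2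
  have hlow : ((min (kappa G) 3 : ℕ) : ℕ∞) ≤ kappaG (subdivisionEdgeNC G H) g :=
    subdivisionEdgeNC.min_kappa_three_le_kappaG hg1 (by omega)
  have hup := subdivisionEdgeNC.kappaG_le_three hGconn hGnc hHconn.preconnected hW
  have hκ := kappa_pos hGconn.preconnected hGnc
  have heq_of_cut (A : Finset V) (hA : IsMinVertexCut G A) (hindep : G.IsIndepSet ↑A)
      (h3 : kappa G ≤ 3) : kappaG (subdivisionEdgeNC G H) g = kappa G :=
    le_antisymm (hA.2 ▸ subdivisionEdgeNC.kappaG_le_card_of_isVertexCut hHconn.preconnected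
      (hGconn.preconnected.exists_adj_of_ne_top hGnc) hW hA.1 hindep) (by simpa [h3] using hlow)
  refine ⟨⟨fun h => ?_, fun h => ?_⟩, ?_, ?_, ?_⟩
  · rw [h] at hlow
    have : min (kappa G) 3 ≤ 1 := by exact_mod_cast hlow
    omega
  · obtain ⟨A, hA⟩ := exists_isMinVertexCut hGnc
    obtain ⟨v, rfl⟩ := Finset.card_eq_one.mp (hA.2.trans h)
    simpa [h] using heq_of_cut _ hA (by simp) (by omega)
  · rintro ⟨hκ2, u, v, huv, hnadj, hA⟩
    simpa [hκ2] using heq_of_cut _ hA (by simp [Set.pairwise_pair, hnadj, G.adj_comm])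
      (by omega)
  · rintro ⟨hκ2, hadj⟩
    exact le_antisymm hup (subdivisionEdgeNC.three_le_kappaG hg1 (by omega) hκ2 hadj)
  · intro h3
    exact le_antisymm hup (by simpa [min_eq_right h3] using hlow)

end ExtraConn
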